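/- arXiv:2004.10543 — 3 statements merged into one kernel-verified Lean document; each statement's English description precedes it below -/
import Mathlib

section
/- Let K > 1. There exists a constant c > 0 (depending only on K) such that the following deterministic statement holds: let N be a real n×n matrix with ‖N‖ ≤ K√n, let λ ∈ ℂ with |λ| ≤ K and δ := Im(λ) > 0, and set M := N − λ√n·I. If z = x + iy ∈ ℂⁿ (x, y ∈ ℝⁿ) is a unit vector with ‖Mz‖ ≤ c·δ·√n, then ‖x‖ ≥ c·δ and ‖y‖ ≥ c·δ. -/
open MeasureTheory ProbabilityTheory

noncomputable def euclNormC {n : ℕ} (v : Fin n → ℂ) : ℝ := Real.sqrt (∑ i, ‖v i‖ ^ 2)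

noncomputable def euclNormR {n : ℕ} (v : Fin n → ℝ) : ℝ := Real.sqrt (∑ i, v i ^ 2)

noncomputable def opNormR {n : ℕ} (M : Matrix (Fin n) (Fin n) ℝ) : ℝ :=
  ‖Matrix.toEuclideanCLM (𝕜 := ℝ) M‖

noncomputable def opNormC {n : ℕ} (M : Matrix (Fin n) (Fin n) ℂ) : ℝ :=
  ‖Matrix.toEuclideanCLM (𝕜 := ℂ) M‖

def cplx {n : ℕ} (M : Matrix (Fin n) (Fin n) ℝ) : Matrix (Fin n) (Fin n) ℂ :=
  M.map (fun x => (x : ℂ))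

def SatisfiesAssumption (μ : Measure ℝ) (q T : ℝ) : Prop :=
  0 < q ∧ q < 1 ∧ 0 < T ∧
  (∀ u : ℝ, (μ {x | |x - u| < 1}).toReal ≤ 1 - q) ∧
  q / 2 ≤ ((μ.prod μ) {p | 1 ≤ |p.1 - p.2| ∧ |p.1 - p.2| ≤ T}).toReal ∧
  (μ {x | T < |x|}).toReal ≤ q / 2

def IsIIDEntries {Ω : Type} [MeasureSpace Ω] {n : ℕ}
    (N : Ω → Matrix (Fin n) (Fin n) ℝ) (μ : Measure ℝ) : Prop :=
  (∀ i j, Measurable fun ω => N ω i j) ∧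
  (∀ i j, Measure.map (fun ω => N ω i j) ℙ = μ) ∧
  iIndepFun (fun (p : Fin n × Fin n) ω => N ω p.1 p.2) ℙ

def IsUnitEigenvector {n : ℕ} (M : Matrix (Fin n) (Fin n) ℂ) (u : Fin n → ℂ) : Prop :=
  euclNormC u = 1 ∧ ∃ l : ℂ, M.mulVec u = l • u

lemma enr_eq {n : ℕ} (v : Fin n → ℝ) :
    euclNormR v = ‖(WithLp.equiv 2 (Fin n → ℝ)).symm v‖ := by
  rw [EuclideanSpace.norm_eq]
  simp [euclNormR, sq_abs]

lemma enr_nonneg {n : ℕ} (v : Fin n → ℝ) : 0 ≤ euclNormR v := Real.sqrt_nonneg _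

lemma key_ineq {n : ℕ} (N : Matrix (Fin n) (Fin n) ℝ) (u v r : Fin n → ℝ) (a b : ℝ)
    (h : ∀ j, b * u j = N.mulVec v j - a * v j - r j) :
    |b| * euclNormR u ≤ opNormR N * euclNormR v + |a| * euclNormR v + euclNormR r := by
  rw [enr_eq, enr_eq, enr_eq]
  set U := (WithLp.equiv 2 (Fin n → ℝ)).symm u
  set V := (WithLp.equiv 2 (Fin n → ℝ)).symm v
  set R := (WithLp.equiv 2 (Fin n → ℝ)).symm r
  have hUE : b • U = Matrix.toEuclideanCLM (𝕜 := ℝ) N V - a • V - R := by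
    ext j
    have : (Matrix.toEuclideanCLM (𝕜 := ℝ) N V) j = N.mulVec v j := by
      simp [V, Matrix.toEuclideanCLM_toLp, Matrix.toLin'_apply]
    simpa [U, V, R, this] using h j
  have h1 : ‖b • U‖ = |b| * ‖U‖ := by rw [norm_smul]; simp
  rw [← h1, hUE]
  calc ‖Matrix.toEuclideanCLM (𝕜 := ℝ) N V - a • V - R‖
      ≤ ‖Matrix.toEuclideanCLM (𝕜 := ℝ) N V - a • V‖ + ‖R‖ := norm_sub_le _ _
    _ ≤ ‖Matrix.toEuclideanCLM (𝕜 := ℝ) N V‖ + ‖a • V‖ + ‖R‖ := by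
        have := norm_sub_le (Matrix.toEuclideanCLM (𝕜 := ℝ) N V) (a • V); linarith
    _ ≤ opNormR N * ‖V‖ + |a| * ‖V‖ + ‖R‖ := by
        have h2 := (Matrix.toEuclideanCLM (𝕜 := ℝ) N).le_opNorm V
        have h3 : ‖a • V‖ = |a| * ‖V‖ := by rw [norm_smul]; simp
        rw [h3]; exact add_le_add_left (add_le_add_left h2 _) _

lemma normsq_split (c : ℂ) : ‖c‖ ^ 2 = c.re ^ 2 + c.im ^ 2 := by
  rw [Complex.sq_norm, Complex.normSq_apply]; ring

lemma enr_le_encC {n : ℕ} (r : Fin n → ℝ) (w : Fin n → ℂ)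
    (h : ∀ j, r j ^ 2 ≤ ‖w j‖ ^ 2) : euclNormR r ≤ euclNormC w :=
  Real.sqrt_le_sqrt (Finset.sum_le_sum fun j _ => h j)

lemma opNormR_neg {n : ℕ} (N : Matrix (Fin n) (Fin n) ℝ) : opNormR (-N) = opNormR N := by
  unfold opNormR
  rw [map_neg, norm_neg]

set_option maxHeartbeats 2000000 in
theorem statement12 (K : ℝ) (hK : 1 < K) :
    ∃ c : ℝ, 0 < c ∧
      ∀ (n : ℕ) (N : Matrix (Fin n) (Fin n) ℝ), opNormR N ≤ K * Real.sqrt n →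
        ∀ lam : ℂ, ‖lam‖ ≤ K → 0 < lam.im →
          ∀ z : Fin n → ℂ, euclNormC z = 1 →
            euclNormC ((cplx N - (lam * ((Real.sqrt n : ℝ) : ℂ)) •
                (1 : Matrix (Fin n) (Fin n) ℂ)).mulVec z) ≤ c * lam.im * Real.sqrt n →
            c * lam.im ≤ euclNormR (fun j => (z j).re) ∧
              c * lam.im ≤ euclNormR (fun j => (z j).im) := by
  have hK0 : (0:ℝ) < K := lt_trans one_pos hK
  refine ⟨1/(8*K), by positivity, ?_⟩
  intro n N hN lam hlam hδ z hz hMz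
  set c : ℝ := 1/(8*K) with hc
  set δ := lam.im with hδdef
  set sn := Real.sqrt n with hsn
  set x : Fin n → ℝ := fun j => (z j).re with hx
  set y : Fin n → ℝ := fun j => (z j).im with hy
  set w := ((cplx N - (lam * (sn:ℂ)) • (1 : Matrix (Fin n) (Fin n) ℂ)).mulVec z) with hwdef
  set a := lam.re * sn with ha
  set b := δ * sn with hb
  clear_value c δ sn x y w a b
  -- n ≥ 1 and sn ≥ 1
  have hn : 1 ≤ n := by
    rcases Nat.eq_zero_or_pos n with h | h
    · exfalso; subst h; simp [euclNormC] at hz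
    · exact h
  have hsn1 : (1:ℝ) ≤ sn := by
    rw [hsn]
    calc (1:ℝ) = Real.sqrt 1 := (Real.sqrt_one).symm
      _ ≤ Real.sqrt n := Real.sqrt_le_sqrt (by exact_mod_cast hn)
  have hsn0 : (0:ℝ) < sn := lt_of_lt_of_le one_pos hsn1
  -- components of w
  have hw : ∀ j, w j = (cplx N).mulVec z j - (lam * (sn:ℂ)) * z j := by
    intro j
    rw [hwdef, Matrix.sub_mulVec, Matrix.smul_mulVec, Matrix.one_mulVec]
    simp
  have hNre : ∀ j, ((cplx N).mulVec z j).re = N.mulVec x j := by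
    intro j
    simp [Matrix.mulVec, dotProduct, cplx, Complex.re_sum, Complex.mul_re, hx]
  have hNim : ∀ j, ((cplx N).mulVec z j).im = N.mulVec y j := by
    intro j
    simp [Matrix.mulVec, dotProduct, cplx, Complex.im_sum, Complex.mul_im, hy]
  have hwre : ∀ j, (w j).re = N.mulVec x j - a * x j + b * y j := by
    intro j
    rw [hw j, Complex.sub_re, hNre j, Complex.mul_re]
    simp [ha, hb, hx, hy, hδdef]
    ring
  have hwim : ∀ j, (w j).im = N.mulVec y j - b * x j - a * y j := by
    intro j
    rw [hw j, Complex.sub_im, hNim j, Complex.mul_im]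
    simp [ha, hb, hx, hy, hδdef]
    ring
  -- the two key inequalities
  have hid1 : ∀ j, b * x j = N.mulVec y j - a * y j - (fun j => (w j).im) j := by
    intro j; have := hwim j; simp only []; linarith
  have hid2 : ∀ j, b * y j = (-N).mulVec x j - (-a) * x j - (fun j => -(w j).re) j := by
    intro j; have := hwre j
    rw [Matrix.neg_mulVec]
    simp only [Pi.neg_apply]
    linarith
  have hI1 := key_ineq N x y (fun j => (w j).im) a b hid1
  have hI2 := key_ineq (-N) y x (fun j => -(w j).re) (-a) b hid2
  rw [opNormR_neg, abs_neg] at hI2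
  -- bounds
  have hwim_le : euclNormR (fun j => (w j).im) ≤ c * δ * sn := by
    refine le_trans (enr_le_encC _ w fun j => ?_) hMz
    rw [normsq_split]; nlinarith [sq_nonneg (w j).re]
  have hwre_le : euclNormR (fun j => -(w j).re) ≤ c * δ * sn := by
    refine le_trans (enr_le_encC _ w fun j => ?_) hMz
    rw [normsq_split]; nlinarith [sq_nonneg (w j).im]
  have hb_abs : |b| = δ * sn := by
    rw [hb, abs_of_pos (mul_pos hδ hsn0)]
  have ha_abs : |a| ≤ K * sn := by
    rw [ha, abs_mul, abs_of_pos hsn0]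
    exact mul_le_mul_of_nonneg_right (le_trans (Complex.abs_re_le_norm lam) hlam) hsn0.le
  set X := euclNormR x with hX
  set Y := euclNormR y with hY
  clear_value X Y
  have hX0 : 0 ≤ X := by rw [hX]; exact enr_nonneg x
  have hY0 : 0 ≤ Y := by rw [hY]; exact enr_nonneg y
  have hδK : δ ≤ K := by rw [hδdef]; exact le_trans (le_trans (le_abs_self _) (Complex.abs_im_le_norm lam)) hlam
  -- divide by sn
  have H1 : δ * X ≤ 2 * K * Y + c * δ := by
    have hs : (δ * X) * sn ≤ (2 * K * Y + c * δ) * sn := by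
      have h1 : opNormR N * Y ≤ K * sn * Y :=
        mul_le_mul_of_nonneg_right hN hY0
      have h2 : |a| * Y ≤ K * sn * Y := mul_le_mul_of_nonneg_right ha_abs hY0
      rw [hb_abs] at hI1
      nlinarith [hI1, hwim_le]
    exact le_of_mul_le_mul_right hs hsn0
  have H2 : δ * Y ≤ 2 * K * X + c * δ := by
    have hs : (δ * Y) * sn ≤ (2 * K * X + c * δ) * sn := by
      have h1 : opNormR N * X ≤ K * sn * X :=
        mul_le_mul_of_nonneg_right hN hX0
      have h2 : |a| * X ≤ K * sn * X := mul_le_mul_of_nonneg_right ha_abs hX0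
      rw [hb_abs] at hI2
      nlinarith [hI2, hwre_le]
    exact le_of_mul_le_mul_right hs hsn0
  -- unit norm decomposition
  have hunit : X ^ 2 + Y ^ 2 = 1 := by
    have hS : (∑ i, ‖z i‖ ^ 2) = 1 := by
      have h0 : (0:ℝ) ≤ ∑ i, ‖z i‖ ^ 2 :=
        Finset.sum_nonneg fun i _ => sq_nonneg _
      rwa [euclNormC, Real.sqrt_eq_one] at hz
    have hXsq : X ^ 2 = ∑ i, x i ^ 2 := by
      rw [hX]; exact Real.sq_sqrt (Finset.sum_nonneg fun i _ => sq_nonneg _)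
    have hYsq : Y ^ 2 = ∑ i, y i ^ 2 := by
      rw [hY]; exact Real.sq_sqrt (Finset.sum_nonneg fun i _ => sq_nonneg _)
    rw [hXsq, hYsq, ← Finset.sum_add_distrib, ← hS]
    exact Finset.sum_congr rfl fun i _ => by rw [normsq_split (z i), hx, hy]
  -- final arithmetic
  have hcK : c * K = 1/8 := by rw [hc]; field_simp
  have hc8 : c ≤ 1/8 := by
    rw [hc]
    have h8 : (8:ℝ) ≤ 8*K := by linarith
    exact one_div_le_one_div_of_le (by norm_num) h8
  have hc0 : 0 < c := by rw [hc]; positivity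
  have hcδ8 : c * δ ≤ 1/8 := by
    have := mul_le_mul_of_nonneg_left hδK hc0.le
    linarith [hcK]
  have hcδδ : c * δ ≤ δ/8 := by
    have := mul_le_mul_of_nonneg_right hc8 hδ.le
    linarith
  have hfinal : ∀ A B : ℝ, 0 ≤ A → 0 ≤ B → A ^ 2 + B ^ 2 = 1 →
      δ * B ≤ 2 * K * A + c * δ → A < c * δ → False := by
    intro A B hA0 hB0 hAB hH hcon
    have hAlt : A < 1/8 := lt_of_lt_of_le hcon hcδ8
    have h2KA : 2 * K * A < 2 * K * (c * δ) :=
      mul_lt_mul_of_pos_left hcon (by linarith)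
    have e2 : 2 * K * (c * δ) = δ/4 := by
      have h : 2 * K * (c * δ) = 2 * (c * K) * δ := by ring
      rw [h, hcK]; ring
    have hBδ : δ * B < δ * (3/8) := by
      rw [e2] at h2KA
      linarith
    have hBlt : B < 3/8 := lt_of_mul_lt_mul_left hBδ hδ.le
    have hA2 : A ^ 2 < 1/64 := by
      have h1 : A * A ≤ (1/8) * A := mul_le_mul_of_nonneg_right hAlt.le hA0
      have h2 : A ^ 2 = A * A := sq A
      linarith
    have hB2 : B ^ 2 < 9/64 := by
      have h1 : B * B ≤ (3/8) * B := mul_le_mul_of_nonneg_right hBlt.le hB0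
      have h2 : B ^ 2 = B * B := sq B
      linarith
    linarith
  constructor
  · by_contra hcon
    push_neg at hcon
    exact hfinal X Y hX0 hY0 hunit H2 hcon
  · by_contra hcon
    push_neg at hcon
    exact hfinal Y X hY0 hX0 (by linarith) H1 hcon
end

section
/- For every unit vector z = x + iy ∈ ℂⁿ (x, y ∈ ℝⁿ, ‖x‖² + ‖y‖² = 1), the minimum over θ ∈ ℝ of ‖Re(e^{iθ}z)‖² = ‖cos(θ)x − sin(θ)y‖² equals 1/2 − √(1 − 4·d(z)²)/2, where d(z) := √(‖x‖²‖y‖² − (x·y)²). Consequently, for constants K > 1 and c > 0 as in the lower-bound lemma for real and imaginary parts, there exists a constant c' > 0 such that: if N is a real n×n matrix with ‖N‖ ≤ K√n, λ ∈ ℂ with |λ| ≤ K and δ := Im(λ) > 0, M := N − λ√n·I, and z is a unit vector with ‖Mz‖ ≤ c·δ·√n, then d(z) ≥ c'·δ. -/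
open MeasureTheory ProbabilityTheory

/-- Euclidean distance from a vector to the integer lattice `ℤⁿ`
(`round` gives the nearest integer to each coordinate). -/
noncomputable def distToIntLattice {n : ℕ} (v : Fin n → ℝ) : ℝ :=
  Real.sqrt (∑ j, |v j - round (v j)| ^ 2)

/-- `log₊ x = max (log x) 0`. -/
noncomputable def logPlus (x : ℝ) : ℝ := max (Real.log x) 0

/-- The least common denominator (LCD) of a matrix `U ∈ ℝ^{m×n}` at parameter `L`:
`inf {‖θ‖ : θ ∈ ℝᵐ, dist(Uᵀθ, ℤⁿ) < L √(log₊(‖Uᵀθ‖/L))}`. -/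
noncomputable def lcdMatrix {m n : ℕ} (L : ℝ) (U : Matrix (Fin m) (Fin n) ℝ) : ℝ :=
  sInf {r : ℝ | ∃ θ : Fin m → ℝ, r = euclNormR θ ∧
    distToIntLattice (Matrix.vecMul θ U) <
      L * Real.sqrt (logPlus (euclNormR (Matrix.vecMul θ U) / L))}

/-- The LCD of a complex vector `z = x + iy` is the LCD of the `2 × n` matrix with
rows `xᵀ` and `yᵀ`. -/
noncomputable def lcdC {n : ℕ} (L : ℝ) (z : Fin n → ℂ) : ℝ :=
  lcdMatrix L (Matrix.of ![fun j => (z j).re, fun j => (z j).im])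

/-- The real-imaginary correlation `d(z) = √(‖x‖²‖y‖² − (x·y)²)` of `z = x + iy`. -/
noncomputable def riCorr {n : ℕ} (z : Fin n → ℂ) : ℝ :=
  Real.sqrt ((∑ j, (z j).re ^ 2) * (∑ j, (z j).im ^ 2) - (∑ j, (z j).re * (z j).im) ^ 2)


lemma aux_norm_split {n : ℕ} (z : Fin n → ℂ) (hz : euclNormC z = 1) :
    (∑ j, (z j).re ^ 2) + (∑ j, (z j).im ^ 2) = 1 := by
  have hnn : (0:ℝ) ≤ ∑ j, ‖z j‖ ^ 2 := Finset.sum_nonneg fun _ _ => sq_nonneg _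
  have h1 : ∑ j, ‖z j‖ ^ 2 = 1 := by
    have := hz
    unfold euclNormC at this
    nlinarith [Real.sq_sqrt hnn]
  calc (∑ j, (z j).re ^ 2) + (∑ j, (z j).im ^ 2)
      = ∑ j, ((z j).re ^ 2 + (z j).im ^ 2) := by rw [Finset.sum_add_distrib]
    _ = ∑ j, ‖z j‖ ^ 2 := Finset.sum_congr rfl fun j _ => by
        rw [Complex.sq_norm, Complex.normSq_apply]; ring
    _ = 1 := h1

set_option maxHeartbeats 1000000 in
lemma aux_main (n : ℕ) (z : Fin n → ℂ) (hz : euclNormC z = 1) :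
    IsLeast {r : ℝ | ∃ θ : ℝ,
        r = ∑ j, (Real.cos θ * (z j).re - Real.sin θ * (z j).im) ^ 2}
      (1 / 2 - Real.sqrt (1 - 4 * riCorr z ^ 2) / 2) := by
  set a : ℝ := ∑ j, (z j).re ^ 2 with ha
  set b : ℝ := ∑ j, (z j).im ^ 2 with hb
  set p : ℝ := ∑ j, (z j).re * (z j).im with hp
  have hab : a + b = 1 := aux_norm_split z hz
  have hCS : p ^ 2 ≤ a * b :=
    Finset.sum_mul_sq_le_sq_mul_sq _ (fun j => (z j).re) (fun j => (z j).im)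
  have hri : riCorr z = Real.sqrt (a * b - p ^ 2) := rfl
  have hri2 : riCorr z ^ 2 = a * b - p ^ 2 := by
    rw [hri]; exact Real.sq_sqrt (by linarith)
  set A : ℝ := (a - b) / 2 with hA
  set R : ℝ := Real.sqrt (A ^ 2 + p ^ 2) with hR
  have hRnn : 0 ≤ R := Real.sqrt_nonneg _
  have hR2 : R ^ 2 = A ^ 2 + p ^ 2 := Real.sq_sqrt (by positivity)
  have hval : 1 / 2 - Real.sqrt (1 - 4 * riCorr z ^ 2) / 2 = 1 / 2 - R := by
    have h4 : 1 - 4 * riCorr z ^ 2 = (2 * R) ^ 2 := by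
      rw [hri2]
      linear_combination (-4 : ℝ) * hR2 - (a + b + 1) * hab - 4 * (A + (a - b) / 2) * hA
    rw [h4, Real.sqrt_sq (by positivity)]; ring
  have hexp : ∀ θ : ℝ, ∑ j, (Real.cos θ * (z j).re - Real.sin θ * (z j).im) ^ 2
      = 1 / 2 + A * Real.cos (2 * θ) - p * Real.sin (2 * θ) := by
    intro θ
    have e1 : ∑ j, (Real.cos θ * (z j).re - Real.sin θ * (z j).im) ^ 2
        = Real.cos θ ^ 2 * a - 2 * Real.cos θ * Real.sin θ * p + Real.sin θ ^ 2 * b := by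
      rw [ha, hb, hp, Finset.mul_sum, Finset.mul_sum, Finset.mul_sum,
        ← Finset.sum_sub_distrib, ← Finset.sum_add_distrib]
      exact Finset.sum_congr rfl fun j _ => by ring
    rw [e1, Real.cos_two_mul, Real.sin_two_mul]
    linear_combination b * (Real.sin_sq_add_cos_sq θ) + hab / 2
      + (1 - 2 * Real.cos θ ^ 2) * hA
  rw [hval]
  constructor
  · -- membership
    have hkey : ∃ t : ℝ, A * Real.cos t - p * Real.sin t = -R := by
      rcases eq_or_lt_of_le hRnn with hR0 | hR0
      · refine ⟨0, ?_⟩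
        have h0 : A ^ 2 + p ^ 2 = 0 := by rw [← hR2, ← hR0]; norm_num
        have hA0 : A = 0 := by nlinarith [sq_nonneg A, sq_nonneg p]
        have hp0 : p = 0 := by nlinarith [sq_nonneg A, sq_nonneg p]
        rw [hA0, hp0, ← hR0]; norm_num
      · have hRne : R ≠ 0 := ne_of_gt hR0
        have hAbs : |A| ≤ R := by
          rw [← Real.sqrt_sq_eq_abs, hR]
          exact Real.sqrt_le_sqrt (by nlinarith [sq_nonneg p])
        have h1 : |(-(A / R))| ≤ 1 := by
          rw [abs_neg, abs_div, abs_of_pos hR0]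
          exact (div_le_one hR0).mpr hAbs
        have hARle := abs_le.mp h1
        have hcos : Real.cos (Real.arccos (-(A / R))) = -(A / R) :=
          Real.cos_arccos hARle.1 hARle.2
        have hsin : Real.sin (Real.arccos (-(A / R))) = |p| / R := by
          rw [Real.sin_arccos]
          have hpr : 1 - (-(A / R)) ^ 2 = (|p| / R) ^ 2 := by
            field_simp
            linear_combination hR2 - sq_abs p
          rw [hpr, Real.sqrt_sq (div_nonneg (abs_nonneg p) hR0.le)]
        rcases le_or_gt 0 p with hpsgn | hpsgn
        · refine ⟨Real.arccos (-(A / R)), ?_⟩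
          rw [hcos, hsin, abs_of_nonneg hpsgn]
          field_simp
          linear_combination hR2
        · refine ⟨-Real.arccos (-(A / R)), ?_⟩
          rw [Real.cos_neg, Real.sin_neg, hcos, hsin, abs_of_neg hpsgn]
          field_simp
          linear_combination hR2
    obtain ⟨t, ht⟩ := hkey
    refine ⟨t / 2, ?_⟩
    rw [hexp (t / 2), show 2 * (t / 2) = t by ring]
    linarith [ht]
  · -- lower bound
    rintro r ⟨θ, hθ⟩
    rw [hθ, hexp θ]
    have h1 := Real.sin_sq_add_cos_sq (2 * θ)
    have hCS2 : (A * Real.cos (2 * θ) - p * Real.sin (2 * θ)) ^ 2 ≤ R ^ 2 := by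
      nlinarith [sq_nonneg (A * Real.sin (2 * θ) + p * Real.cos (2 * θ)), h1,
        sq_nonneg A, sq_nonneg p, hR2]
    nlinarith [hCS2, hRnn]

set_option maxHeartbeats 2000000 in
theorem statement15 :
    (∀ (n : ℕ) (z : Fin n → ℂ), euclNormC z = 1 →
      IsLeast {r : ℝ | ∃ θ : ℝ,
          r = ∑ j, (Real.cos θ * (z j).re - Real.sin θ * (z j).im) ^ 2}
        (1 / 2 - Real.sqrt (1 - 4 * riCorr z ^ 2) / 2)) ∧
    ∀ K c : ℝ, 1 < K → 0 < c →
      (∀ (n : ℕ) (N : Matrix (Fin n) (Fin n) ℝ), opNormR N ≤ K * Real.sqrt n →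
        ∀ lam : ℂ, ‖lam‖ ≤ K → 0 < lam.im →
          ∀ z : Fin n → ℂ, euclNormC z = 1 →
            euclNormC ((cplx N - (lam * ((Real.sqrt n : ℝ) : ℂ)) •
                (1 : Matrix (Fin n) (Fin n) ℂ)).mulVec z) ≤ c * lam.im * Real.sqrt n →
            c * lam.im ≤ euclNormR (fun j => (z j).re) ∧
              c * lam.im ≤ euclNormR (fun j => (z j).im)) →
      ∃ c' : ℝ, 0 < c' ∧
        ∀ (n : ℕ) (N : Matrix (Fin n) (Fin n) ℝ), opNormR N ≤ K * Real.sqrt n →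
          ∀ lam : ℂ, ‖lam‖ ≤ K → 0 < lam.im →
            ∀ z : Fin n → ℂ, euclNormC z = 1 →
              euclNormC ((cplx N - (lam * ((Real.sqrt n : ℝ) : ℂ)) •
                  (1 : Matrix (Fin n) (Fin n) ℂ)).mulVec z) ≤ c * lam.im * Real.sqrt n →
              c' * lam.im ≤ riCorr z := by
  refine ⟨fun n z hz => aux_main n z hz, ?_⟩
  intro K c hK hc H
  refine ⟨c / 2, by positivity, ?_⟩
  intro n N hN lam hlam him z hz hM
  obtain ⟨hx, hy⟩ := H n N hN lam hlam him z hz hM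
  set δ : ℝ := lam.im with hδ
  have hcd : 0 ≤ c * δ := by positivity
  set a : ℝ := ∑ j, (z j).re ^ 2 with ha
  set b : ℝ := ∑ j, (z j).im ^ 2 with hb
  set p : ℝ := ∑ j, (z j).re * (z j).im with hp
  have hab : a + b = 1 := aux_norm_split z hz
  have hCS : p ^ 2 ≤ a * b :=
    Finset.sum_mul_sq_le_sq_mul_sq _ (fun j => (z j).re) (fun j => (z j).im)
  have hann : (0:ℝ) ≤ a := Finset.sum_nonneg fun _ _ => sq_nonneg _
  have hbnn : (0:ℝ) ≤ b := Finset.sum_nonneg fun _ _ => sq_nonneg _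
  have ha2 : (c * δ) ^ 2 ≤ a := by
    have h := pow_le_pow_left₀ hcd hx 2
    unfold euclNormR at h
    rwa [Real.sq_sqrt hann] at h
  have hb2 : (c * δ) ^ 2 ≤ b := by
    have h := pow_le_pow_left₀ hcd hy 2
    unfold euclNormR at h
    rwa [Real.sq_sqrt hbnn] at h
  have hhalf : 2 * (c * δ) ^ 2 ≤ 1 := by linarith
  -- apply the minimisation lemma
  obtain ⟨⟨θ₀, hθ₀⟩, -⟩ := aux_main n z hz
  -- the rotated vector
  set s : ℂ := Complex.exp (θ₀ * Complex.I) with hs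
  have hsabs : ‖s‖ = 1 := Complex.norm_exp_ofReal_mul_I θ₀
  set z' : Fin n → ℂ := fun j => s * z j with hz'def
  have hnormz' : ∀ v : Fin n → ℂ, euclNormC (fun j => s * v j) = euclNormC v := by
    intro v
    unfold euclNormC
    congr 1
    refine Finset.sum_congr rfl fun j _ => ?_
    rw [norm_mul, hsabs, one_mul]
  have hz1 : euclNormC z' = 1 := by rw [hz'def, hnormz' z, hz]
  have hMz' : euclNormC ((cplx N - (lam * ((Real.sqrt n : ℝ) : ℂ)) •
      (1 : Matrix (Fin n) (Fin n) ℂ)).mulVec z') ≤ c * δ * Real.sqrt n := by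
    have hsm : z' = s • z := rfl
    rw [hsm, Matrix.mulVec_smul]
    have : ((cplx N - (lam * ((Real.sqrt n : ℝ) : ℂ)) •
        (1 : Matrix (Fin n) (Fin n) ℂ)).mulVec z) = fun j =>
        ((cplx N - (lam * ((Real.sqrt n : ℝ) : ℂ)) •
        (1 : Matrix (Fin n) (Fin n) ℂ)).mulVec z) j := rfl
    calc euclNormC (s • ((cplx N - (lam * ((Real.sqrt n : ℝ) : ℂ)) •
          (1 : Matrix (Fin n) (Fin n) ℂ)).mulVec z))
        = euclNormC ((cplx N - (lam * ((Real.sqrt n : ℝ) : ℂ)) •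
          (1 : Matrix (Fin n) (Fin n) ℂ)).mulVec z) := hnormz' _
      _ ≤ c * δ * Real.sqrt n := hM
  have h2 := (H n N hN lam hlam him z' hz1 hMz').1
  have hre : (fun j => (z' j).re) =
      fun j => Real.cos θ₀ * (z j).re - Real.sin θ₀ * (z j).im := by
    funext j
    rw [hz'def]
    simp only [Complex.mul_re, hs, Complex.exp_ofReal_mul_I_re, Complex.exp_ofReal_mul_I_im]
  rw [hre] at h2
  have hsumnn : (0:ℝ) ≤ ∑ j, (Real.cos θ₀ * (z j).re - Real.sin θ₀ * (z j).im) ^ 2 :=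
    Finset.sum_nonneg fun _ _ => sq_nonneg _
  have h3 : (c * δ) ^ 2 ≤ ∑ j, (Real.cos θ₀ * (z j).re - Real.sin θ₀ * (z j).im) ^ 2 := by
    have h := pow_le_pow_left₀ hcd h2 2
    unfold euclNormR at h
    rwa [Real.sq_sqrt hsumnn] at h
  rw [← hθ₀] at h3
  -- now h3 : (c*δ)^2 ≤ 1/2 - √(1 - 4 riCorr²)/2
  have hri : riCorr z = Real.sqrt (a * b - p ^ 2) := rfl
  have hri2 : riCorr z ^ 2 = a * b - p ^ 2 := by
    rw [hri]; exact Real.sq_sqrt (by linarith)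
  have hSle : a * b - p ^ 2 ≤ 1 / 4 := by nlinarith [sq_nonneg (a - b), sq_nonneg p]
  have h1S : (0:ℝ) ≤ 1 - 4 * riCorr z ^ 2 := by rw [hri2]; linarith
  have hsq : Real.sqrt (1 - 4 * riCorr z ^ 2) ^ 2 = 1 - 4 * riCorr z ^ 2 :=
    Real.sq_sqrt h1S
  have hsle : Real.sqrt (1 - 4 * riCorr z ^ 2) ≤ 1 - 2 * (c * δ) ^ 2 := by linarith
  have h6 : 1 - 4 * riCorr z ^ 2 ≤ (1 - 2 * (c * δ) ^ 2) ^ 2 := by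
    nlinarith [Real.sqrt_nonneg (1 - 4 * riCorr z ^ 2), hsle, hsq]
  have h7 : (c / 2 * δ) ^ 2 ≤ a * b - p ^ 2 := by
    rw [← hri2]
    nlinarith [hhalf, sq_nonneg (c * δ)]
  calc c / 2 * δ = Real.sqrt ((c / 2 * δ) ^ 2) := (Real.sqrt_sq (by positivity)).symm
    _ ≤ Real.sqrt (a * b - p ^ 2) := Real.sqrt_le_sqrt h7
    _ = riCorr z := hri.symm
end

section
/- Let K > 1, let N ∈ ℂ^{n×n} with ‖N‖ ≤ K√n, let z ∈ ℂ with |z| ≤ K, and set M := N − z√n·I. Suppose that for some 0 < s ≤ K√n the characteristic polynomial of N has two roots λ_i, λ_j (counted with multiplicity, i.e., either two distinct eigenvalues or one eigenvalue of algebraic multiplicity at least two) lying in the closed ball of radius s centered at z√n. Then there exist orthogonal unit vectors v, w ∈ ℂⁿ and a complex number α with |α| ≤ 2K√n such that Mv = (λ_i − z√n)v and Mw = (λ_j − z√n)w + αv; consequently ‖Mv‖ ≤ s and ‖Mw − αv‖ ≤ s. -/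
open MeasureTheory ProbabilityTheory

open Polynomial Matrix

lemma eval_charpoly_aux {ι : Type*} [Fintype ι] [DecidableEq ι] (M : Matrix ι ι ℂ) (μ : ℂ) :
    M.charpoly.eval μ = (μ • (1 : Matrix ι ι ℂ) - M).det := by
  rw [Matrix.charpoly, eval_det, matPolyEquiv_charmatrix]
  congr 1
  rw [eval_sub, eval_X, eval_C]
  congr 1
  simp [Matrix.scalar_apply, Matrix.smul_eq_diagonal_mul]

lemma exists_eigenvec_aux {ι : Type*} [Fintype ι] [DecidableEq ι] (M : Matrix ι ι ℂ) {μ : ℂ}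
    (h : μ ∈ M.charpoly.roots) : ∃ c : ι → ℂ, c ≠ 0 ∧ M.mulVec c = μ • c := by
  have hr : M.charpoly.IsRoot μ := isRoot_of_mem_roots h
  have hdet : (μ • (1 : Matrix ι ι ℂ) - M).det = 0 := by
    rw [← eval_charpoly_aux]; exact hr
  obtain ⟨c, hc, hc0⟩ := (Matrix.exists_mulVec_eq_zero_iff).2 hdet
  refine ⟨c, hc, ?_⟩
  rw [Matrix.sub_mulVec, sub_eq_zero, Matrix.smul_mulVec, Matrix.one_mulVec] at hc0
  exact hc0.symm

lemma charpoly_one_by_one (M : Matrix (Fin 1) (Fin 1) ℂ) :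
    M.charpoly = X - C (M 0 0) := by
  rw [Matrix.charpoly, Matrix.det_fin_one, charmatrix_apply_eq]

lemma euclNormC_eq_norm' {n : ℕ} (x : EuclideanSpace ℂ (Fin n)) :
    euclNormC ((WithLp.equiv 2 (Fin n → ℂ)) x) = ‖x‖ := by
  rw [euclNormC, EuclideanSpace.norm_eq]
  rfl

theorem main_construction (n : ℕ)
    (N : Matrix (Fin n) (Fin n) ℂ)
    (li lj : ℂ)
    (hroots : ({li, lj} : Multiset ℂ) ≤ (Matrix.charpoly N).roots) :
    ∃ (v w : Fin n → ℂ) (α : ℂ),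
      euclNormC v = 1 ∧ euclNormC w = 1 ∧
      (∑ i, starRingEnd ℂ (v i) * w i) = 0 ∧
      ‖α‖ ≤ opNormC N ∧
      N.mulVec v = li • v ∧
      N.mulVec w = lj • w + α • v := by
  classical
  -- setup
  set E := EuclideanSpace ℂ (Fin n)
  set f : E →ₗ[ℂ] E := Matrix.toEuclideanLin N with hf
  -- n ≥ 2
  have hcard2 : ({li, lj} : Multiset ℂ).card = 2 := rfl
  have hn2 : 2 ≤ n := by
    have h1 := Multiset.card_le_card hroots
    have h2 := (Matrix.charpoly N).card_roots'
    rw [Matrix.charpoly_natDegree_eq_dim] at h2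
    simp only [hcard2, Fintype.card_fin] at h1 h2 ⊢
    omega
  -- eigenvector for li
  have hli_mem : li ∈ (Matrix.charpoly N).roots :=
    Multiset.mem_of_le hroots (by simp)
  obtain ⟨v0, hv0ne, hv0⟩ := exists_eigenvec_aux N hli_mem
  set v0' : E := (WithLp.equiv 2 (Fin n → ℂ)).symm v0 with hv0'
  have hv0'ne : v0' ≠ 0 := by
    intro h; apply hv0ne; simpa [hv0'] using congrArg WithLp.ofLp h
  have hfv0 : f v0' = li • v0' := by
    rw [hf, hv0']; change WithLp.toLp 2 (N *ᵥ v0) = _; rw [hv0]; rfl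
  set vhat : E := ((‖v0'‖⁻¹ : ℝ) : ℂ) • v0' with hvhat
  have hnv0' : ‖v0'‖ ≠ 0 := norm_ne_zero_iff.2 hv0'ne
  have hvhat_norm : ‖vhat‖ = 1 := by
    rw [hvhat, norm_smul]
    simp [abs_norm, inv_mul_cancel₀ hnv0']
    rw [abs_of_nonneg (norm_nonneg v0')]; exact inv_mul_cancel₀ hnv0'
  have hfvhat : f vhat = li • vhat := by
    rw [hvhat, _root_.map_smul, hfv0, smul_comm]
  clear_value vhat
  -- orthonormal basis extension
  set ι := (Fin 1 ⊕ Fin (n - 1)) with hι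
  have hcardι : Module.finrank ℂ E = Fintype.card ι := by
    show Module.finrank ℂ (EuclideanSpace ℂ (Fin n)) = _
    simp [hι, finrank_euclideanSpace]
    omega
  have horth : Orthonormal ℂ (({Sum.inl 0} : Set ι).restrict (fun _ => vhat)) := by
    constructor
    · intro i; exact hvhat_norm
    · rintro ⟨i, hi⟩ ⟨j, hj⟩ hij
      simp only [Set.mem_singleton_iff] at hi hj
      exact absurd (by simp [Subtype.ext_iff, hi, hj]) hij
  obtain ⟨b, hb⟩ := horth.exists_orthonormalBasis_extension_of_card_eq hcardι
  have hbv : b (Sum.inl 0) = vhat := hb _ rfl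
  -- the matrix of f in basis b
  set A : Matrix ι ι ℂ := LinearMap.toMatrix b.toBasis b.toBasis f with hA
  have hAexp : ∀ j', f (b j') = ∑ i, A i j' • b i := by
    intro j'
    have h1 := b.toBasis.sum_repr (f (b j'))
    rw [← h1]
    congr 1
    ext i
    rw [hA, LinearMap.toMatrix_apply]
    simp
  have hAcol : ∀ i, A i (Sum.inl 0) = if i = Sum.inl 0 then li else 0 := by
    intro i
    rw [hA, LinearMap.toMatrix_apply, OrthonormalBasis.coe_toBasis, hbv, hfvhat, ← hbv,
      ← OrthonormalBasis.coe_toBasis, _root_.map_smul, Module.Basis.repr_self]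
    simp only [Finsupp.smul_single, smul_eq_mul, mul_one, Finsupp.single_apply]
    by_cases h : i = Sum.inl 0 <;> simp [h, eq_comm]
  -- block triangular charpoly factorization
  set B : Matrix (Fin (n - 1)) (Fin (n - 1)) ℂ := A.toBlocks₂₂ with hB
  have hA21 : A.toBlocks₂₁ = 0 := by
    ext i j
    rw [Matrix.toBlocks₂₁]
    simp only [Matrix.of_apply, Matrix.zero_apply]
    rw [Subsingleton.elim j 0, hAcol]
    simp
  have hsplit : N.charpoly = (X - C li) * B.charpoly := by
    have h1 : N.charpoly = A.charpoly := by
      have hN' : N = LinearMap.toMatrix (PiLp.basisFun 2 ℂ (Fin n)) (PiLp.basisFun 2 ℂ (Fin n)) f := by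
        rw [hf, Matrix.toEuclideanLin_eq_toLin, LinearMap.toMatrix_toLin]
      rw [hN', LinearMap.charpoly_toMatrix, hA, LinearMap.charpoly_toMatrix]
    have h2 : A = Matrix.fromBlocks A.toBlocks₁₁ A.toBlocks₁₂ 0 A.toBlocks₂₂ := by
      rw [← hA21, Matrix.fromBlocks_toBlocks]
    have h3 : A.toBlocks₁₁ 0 0 = li := by
      rw [Matrix.toBlocks₁₁]
      simp only [Matrix.of_apply]
      rw [hAcol]
      simp
    rw [h1]
    conv_lhs => rw [h2]
    rw [Matrix.charpoly_fromBlocks_zero₂₁, charpoly_one_by_one, h3]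
  -- lj is a root of B.charpoly
  have hlj_mem : lj ∈ B.charpoly.roots := by
    have hcount := Multiset.le_iff_count.1 hroots lj
    have hc1 : Multiset.count lj ({li, lj} : Multiset ℂ) =
        (if lj = li then 1 else 0) + 1 := by
      rw [Multiset.insert_eq_cons, Multiset.count_cons, Multiset.count_singleton]
      simp [add_comm]
    have hne : (X - C li) * B.charpoly ≠ 0 :=
      mul_ne_zero (X_sub_C_ne_zero li) (B.charpoly_monic.ne_zero)
    rw [hsplit, Polynomial.roots_mul hne, Polynomial.roots_X_sub_C,
      Multiset.count_add, Multiset.count_singleton] at hcount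
    rw [← Multiset.one_le_count_iff_mem]
    rw [hc1] at hcount
    split_ifs at hcount <;> omega
  -- eigenvector of the lower block
  obtain ⟨c, hcne, hc⟩ := exists_eigenvec_aux B hlj_mem
  set w0 : E := ∑ j, c j • b (Sum.inr j) with hw0def
  have hα0 : f w0 = (∑ j, A (Sum.inl 0) (Sum.inr j) * c j) • vhat + lj • w0 := by
    have e1 : f w0 = ∑ i : ι, (∑ j, A i (Sum.inr j) * c j) • b i := by
      rw [hw0def, map_sum]
      calc (∑ j, f (c j • b (Sum.inr j)))
          = ∑ j, ∑ i : ι, (A i (Sum.inr j) * c j) • b i := by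
            refine Finset.sum_congr rfl fun j _ => ?_
            rw [_root_.map_smul, hAexp, Finset.smul_sum]
            refine Finset.sum_congr rfl fun i _ => ?_
            rw [smul_smul, mul_comm]
        _ = ∑ i : ι, ∑ j, (A i (Sum.inr j) * c j) • b i := Finset.sum_comm
        _ = ∑ i : ι, (∑ j, A i (Sum.inr j) * c j) • b i := by
            refine Finset.sum_congr rfl fun i _ => ?_; rw [Finset.sum_smul]
    rw [e1, Fintype.sum_sum_type, Fin.sum_univ_one]
    congr 1
    · rw [hbv]
    · rw [hw0def, Finset.smul_sum]
      refine Finset.sum_congr rfl fun i' _ => ?_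
      have h4 : (∑ j, A (Sum.inr i') (Sum.inr j) * c j) = lj * c i' := by
        have h5 := congrFun hc i'
        simpa [Matrix.mulVec, dotProduct, hB, Matrix.toBlocks₂₂] using h5
      rw [h4, smul_smul]
  have hw0ne : w0 ≠ 0 := by
    obtain ⟨j0, hj0⟩ := Function.ne_iff.1 hcne
    intro h
    apply hj0
    have hrepr : b.toBasis.repr w0 (Sum.inr j0) = c j0 := by
      rw [hw0def]
      simp only [map_sum, _root_.map_smul]
      rw [← OrthonormalBasis.coe_toBasis] 
      simp only [Module.Basis.repr_self, Finsupp.single_apply, Finsupp.coe_finset_sum,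
        Finsupp.coe_smul, Finset.sum_apply, Pi.smul_apply, smul_eq_mul]
      have : ∀ x : Fin (n-1), (c x * if (Sum.inr x : ι) = Sum.inr j0 then 1 else 0)
          = if x = j0 then c x else 0 := by
        intro x
        by_cases hx : x = j0 <;> simp [hx]
      trans (∑ x : Fin (n-1), if x = j0 then c x else 0)
      · exact Finset.sum_congr rfl (fun x _ => this x)
      · rw [Finset.sum_ite_eq' Finset.univ j0 c, if_pos (Finset.mem_univ _)]
    rw [h] at hrepr
    simpa using hrepr.symm
  set r : ℝ := ‖w0‖ with hrdef
  have hrne : r ≠ 0 := norm_ne_zero_iff.2 hw0ne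
  set w : E := ((r⁻¹ : ℝ) : ℂ) • w0 with hwdef
  have hwnorm : ‖w‖ = 1 := by
    rw [hwdef, norm_smul]
    simp only [Complex.norm_real, Real.norm_eq_abs,
      abs_of_nonneg (inv_nonneg.2 (norm_nonneg w0))]
    rw [abs_of_nonneg (inv_nonneg.2 (norm_nonneg w0) : (0:ℝ) ≤ r⁻¹)]
    exact inv_mul_cancel₀ hrne
  set α : ℂ := ((r⁻¹ : ℝ) : ℂ) * (∑ j, A (Sum.inl 0) (Sum.inr j) * c j) with hαdef
  have hfw : f w = lj • w + α • vhat := by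
    rw [hwdef, _root_.map_smul, hα0, smul_add, hαdef, smul_smul,
      smul_comm (((r⁻¹ : ℝ) : ℂ)) lj w0, add_comm]
  have hvw0 : (inner ℂ vhat w0 : ℂ) = 0 := by
    rw [hw0def, inner_sum]
    refine Finset.sum_eq_zero fun j _ => ?_
    rw [inner_smul_right, ← hbv, orthonormal_iff_ite.1 b.orthonormal]
    simp
  have hvw : (inner ℂ vhat w : ℂ) = 0 := by rw [hwdef, inner_smul_right, hvw0, mul_zero]
  clear_value w0
  clear_value w
  have hαbound : ‖α‖ ≤ opNormC N := by
    have hα_eq : α = (inner ℂ vhat (f w) : ℂ) := by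
      rw [hfw, inner_add_right, inner_smul_right, inner_smul_right, hvw, mul_zero,
        inner_self_eq_norm_sq_to_K, hvhat_norm]
      simp
    have h1 : ‖(inner ℂ vhat (f w) : ℂ)‖ ≤ ‖vhat‖ * ‖f w‖ := norm_inner_le_norm _ _
    have h2 : f w = Matrix.toEuclideanCLM (𝕜 := ℂ) N w := by
      rw [hf, ← Matrix.coe_toEuclideanCLM_eq_toEuclideanLin]; rfl
    have h3 : ‖Matrix.toEuclideanCLM (𝕜 := ℂ) N w‖ ≤ opNormC N * ‖w‖ :=
      ContinuousLinearMap.le_opNorm _ _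
    rw [hα_eq]
    calc ‖(inner ℂ vhat (f w) : ℂ)‖ ≤ ‖vhat‖ * ‖f w‖ := h1
      _ = ‖f w‖ := by rw [hvhat_norm, one_mul]
      _ ≤ opNormC N := by rw [h2]; simpa [hwnorm] using h3
  refine ⟨(WithLp.equiv 2 (Fin n → ℂ)) vhat, (WithLp.equiv 2 (Fin n → ℂ)) w, α,
    ?_, ?_, ?_, hαbound, ?_, ?_⟩
  · rw [euclNormC_eq_norm', hvhat_norm]
  · rw [euclNormC_eq_norm', hwnorm]
  · rw [← hvw, PiLp.inner_apply]
    simp [RCLike.inner_apply, mul_comm]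
  · have h6 : N *ᵥ ((WithLp.equiv 2 (Fin n → ℂ)) vhat)
        = (WithLp.equiv 2 (Fin n → ℂ)) (f vhat) :=
      (Matrix.ofLp_toEuclideanLin_apply N vhat).symm
    rw [h6, hfvhat]; rfl
  · have h7 : N *ᵥ ((WithLp.equiv 2 (Fin n → ℂ)) w)
        = (WithLp.equiv 2 (Fin n → ℂ)) (f w) :=
      (Matrix.ofLp_toEuclideanLin_apply N w).symm
    rw [h7, hfw]
    rfl


lemma euclNormC_eq_norm2 {n : ℕ} (x : Fin n → ℂ) :
    euclNormC x = ‖(WithLp.equiv 2 (Fin n → ℂ)).symm x‖ := by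
  rw [euclNormC, EuclideanSpace.norm_eq]; rfl

lemma euclNormC_smul {n : ℕ} (a : ℂ) (x : Fin n → ℂ) :
    euclNormC (a • x) = ‖a‖ * euclNormC x := by
  rw [euclNormC_eq_norm2, euclNormC_eq_norm2, ← norm_smul]; rfl

theorem statement19 (K : ℝ) (hK : 1 < K) (n : ℕ)
    (N : Matrix (Fin n) (Fin n) ℂ) (hN : opNormC N ≤ K * Real.sqrt n)
    (z : ℂ) (hz : ‖z‖ ≤ K)
    (s : ℝ) (hs : 0 < s) (hs' : s ≤ K * Real.sqrt n)
    (li lj : ℂ)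
    (hroots : ({li, lj} : Multiset ℂ) ≤ (Matrix.charpoly N).roots)
    (hli : ‖li - z * ((Real.sqrt n : ℝ) : ℂ)‖ ≤ s)
    (hlj : ‖lj - z * ((Real.sqrt n : ℝ) : ℂ)‖ ≤ s) :
    ∃ (v w : Fin n → ℂ) (α : ℂ),
      euclNormC v = 1 ∧ euclNormC w = 1 ∧
      (∑ i, starRingEnd ℂ (v i) * w i) = 0 ∧
      ‖α‖ ≤ 2 * K * Real.sqrt n ∧
      (N - (z * ((Real.sqrt n : ℝ) : ℂ)) • (1 : Matrix (Fin n) (Fin n) ℂ)).mulVec v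
        = (li - z * ((Real.sqrt n : ℝ) : ℂ)) • v ∧
      (N - (z * ((Real.sqrt n : ℝ) : ℂ)) • (1 : Matrix (Fin n) (Fin n) ℂ)).mulVec w
        = (lj - z * ((Real.sqrt n : ℝ) : ℂ)) • w + α • v ∧
      euclNormC ((N - (z * ((Real.sqrt n : ℝ) : ℂ)) •
          (1 : Matrix (Fin n) (Fin n) ℂ)).mulVec v) ≤ s ∧
      euclNormC ((N - (z * ((Real.sqrt n : ℝ) : ℂ)) •
          (1 : Matrix (Fin n) (Fin n) ℂ)).mulVec w - α • v) ≤ s := by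
  obtain ⟨v, w, α, hv1, hw1, hvw, hαb, hNv, hNw⟩ := main_construction n N li lj hroots
  have hKn : (0:ℝ) ≤ K * Real.sqrt n :=
    mul_nonneg (le_of_lt (lt_trans one_pos hK)) (Real.sqrt_nonneg _)
  set ζ : ℂ := z * ((Real.sqrt n : ℝ) : ℂ) with hζ
  have hMv : (N - ζ • (1 : Matrix (Fin n) (Fin n) ℂ)).mulVec v = (li - ζ) • v := by
    rw [Matrix.sub_mulVec, Matrix.smul_mulVec, Matrix.one_mulVec, hNv, sub_smul]
  have hMw : (N - ζ • (1 : Matrix (Fin n) (Fin n) ℂ)).mulVec w = (lj - ζ) • w + α • v := by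
    rw [Matrix.sub_mulVec, Matrix.smul_mulVec, Matrix.one_mulVec, hNw, sub_smul]
    abel
  refine ⟨v, w, α, hv1, hw1, hvw, ?_, hMv, hMw, ?_, ?_⟩
  · calc ‖α‖ ≤ opNormC N := hαb
      _ ≤ K * Real.sqrt n := hN
      _ ≤ 2 * K * Real.sqrt n := by linarith
  · rw [hMv, euclNormC_smul, hv1, mul_one]
    exact hli
  · rw [hMw, add_sub_cancel_right, euclNormC_smul, hw1, mul_one]
    exact hlj
end
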